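/- arXiv:2502.00393 — 6 statements merged into one kernel-verified Lean document; each statement's English description precedes it below -/
import Mathlib

section
/- Let ξ₁, ξ₂ > 0 and η₁, η₂ ∈ ℝ. Define v := 2 if η₁ = η₂ = 0; v := 1 if (η₂ < η₁ = 0) or (η₁ < η₂ = 0) or (η₁/ξ₁ = η₂/ξ₂ > 0); and v := 0 otherwise. Then there exists a constant C < ∞ (depending only on ξ₁, ξ₂, η₁, η₂) such that for every real L > 0, the sum of 2^(η₁ℓ₁ + η₂ℓ₂) over all pairs (ℓ₁, ℓ₂) of nonnegative integers satisfying ξ₁ℓ₁ + ξ₂ℓ₂ ≤ L is at most C · 2^(L·max(0, η₁/ξ₁, η₂/ξ₂)) · (L + 1)^v. -/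
/-!
Write `rᵢ = ηᵢ / ξᵢ` and, by symmetry, let `r₁ ≤ r₂`. If `η₂ ≤ 0`, then both `ηᵢ ≤ 0`: the simplex
lies in the box `ξᵢ ℓᵢ ≤ L`, and each one-dimensional factor `∑_{ξℓ ≤ L} 2^{ηℓ}` is bounded by the
full geometric series when `η < 0` and by its number `≤ L/ξ + 1` of terms when `η = 0`.
If `η₂ > 0`, the inner sum over `ℓ₂` is a geometric sum dominated by its last term, hence
`O(2^{r₂ (L - ξ₁ ℓ₁)})`; this leaves `2^{r₂ L} ∑_{ξ₁ ℓ₁ ≤ L} 2^{(η₁ - r₂ ξ₁) ℓ₁}`, whose exponent is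
`≤ 0` and vanishes exactly when `r₁ = r₂`.
-/

open scoped ENNReal

noncomputable def truncGeomSum (ξ η M : ℝ) : ℝ≥0∞ :=
  ∑' ℓ : ℕ, if ξ * ℓ ≤ M then (2 : ℝ≥0∞) ^ (η * ℓ) else 0

lemma tsum_two_rpow_mul_natCast (η : ℝ) :
    ∑' ℓ : ℕ, (2 : ℝ≥0∞) ^ (η * ℓ) = (1 - 2 ^ η)⁻¹ := by
  simp_rw [ENNReal.rpow_mul_natCast, ENNReal.tsum_geometric]

lemma one_sub_two_rpow_inv_ne_top {η : ℝ} (hη : η < 0) : (1 - (2 : ℝ≥0∞) ^ η)⁻¹ ≠ ∞ := by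
  have h : (2 : ℝ≥0∞) ^ η < 1 := ENNReal.rpow_lt_one_of_one_lt_of_neg (by norm_num) hη
  simpa [ENNReal.inv_ne_top, tsub_eq_zero_iff_le] using h.not_ge

lemma mul_natCast_le_iff_le_floor {ξ M : ℝ} (hξ : 0 < ξ) (hM : 0 ≤ M) (ℓ : ℕ) :
    ξ * ℓ ≤ M ↔ ℓ ≤ ⌊M / ξ⌋₊ := by
  rw [Nat.le_floor_iff (div_nonneg hM hξ.le), le_div_iff₀ hξ, mul_comm]

lemma truncGeomSum_eq_sum_range {ξ M : ℝ} (η : ℝ) (hξ : 0 < ξ) (hM : 0 ≤ M) :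
    truncGeomSum ξ η M = ∑ ℓ ∈ Finset.range (⌊M / ξ⌋₊ + 1), (2 : ℝ≥0∞) ^ (η * ℓ) := by
  simp_rw [truncGeomSum, mul_natCast_le_iff_le_floor hξ hM, ← Nat.lt_succ_iff,
    ← Finset.mem_range]
  rw [tsum_eq_sum (s := Finset.range _) fun ℓ hℓ => if_neg hℓ]
  exact Finset.sum_congr rfl fun ℓ hℓ => if_pos hℓ

lemma truncGeomSum_mono (ξ η : ℝ) : Monotone (truncGeomSum ξ η) := fun _ _ hMM' =>
  ENNReal.tsum_le_tsum fun _ => by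
    split_ifs with h h'
    exacts [le_rfl, absurd (h.trans hMM') h', zero_le, le_rfl]

lemma truncGeomSum_le_tsum (ξ η M : ℝ) :
    truncGeomSum ξ η M ≤ ∑' ℓ : ℕ, (2 : ℝ≥0∞) ^ (η * ℓ) :=
  ENNReal.tsum_le_tsum fun _ => by split_ifs <;> simp

lemma truncGeomSum_zero_le {ξ M : ℝ} (hξ : 0 < ξ) (hM : 0 ≤ M) :
    truncGeomSum ξ 0 M ≤ ENNReal.ofReal (1 / ξ + 1) * ENNReal.ofReal (M + 1) := by
  rw [truncGeomSum_eq_sum_range 0 hξ hM, ← ENNReal.ofReal_mul (by positivity)]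
  simp only [zero_mul, ENNReal.rpow_zero, Finset.sum_const, Finset.card_range, nsmul_eq_mul,
    mul_one]
  rw [← ENNReal.ofReal_natCast]
  refine ENNReal.ofReal_le_ofReal ?_
  have hfloor : (⌊M / ξ⌋₊ : ℝ) ≤ M / ξ := Nat.floor_le (div_nonneg hM hξ.le)
  have hdiv : M / ξ ≤ 1 / ξ * (M + 1) := by
    rw [one_div_mul_eq_div]
    gcongr
    linarith
  push_cast
  linarith

lemma truncGeomSum_le_of_pos {ξ M η : ℝ} (hξ : 0 < ξ) (hη : 0 < η) (hM : 0 ≤ M) :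
    truncGeomSum ξ η M ≤ (1 - 2 ^ (-η))⁻¹ * 2 ^ (η / ξ * M) := by
  set N := ⌊M / ξ⌋₊
  have hN : η * N ≤ η / ξ * M := by
    rw [div_mul_eq_mul_div, mul_div_assoc]
    exact mul_le_mul_of_nonneg_left (Nat.floor_le (div_nonneg hM hξ.le)) hη.le
  rw [truncGeomSum_eq_sum_range η hξ hM, ← Finset.sum_range_reflect, mul_comm,
    ← tsum_two_rpow_mul_natCast, ← ENNReal.tsum_mul_left]
  refine (Finset.sum_le_sum fun k hk => ?_).trans (ENNReal.sum_le_tsum _)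
  have hkN : k ≤ N := Nat.le_of_lt_succ (Finset.mem_range.mp hk)
  rw [← ENNReal.rpow_add _ _ (by norm_num) (by norm_num)]
  refine ENNReal.rpow_le_rpow_of_exponent_le (by norm_num) ?_
  rw [Nat.cast_sub (by omega)]
  push_cast
  linarith

lemma exists_truncGeomSum_le_of_nonpos {ξ η : ℝ} (hξ : 0 < ξ) (hη : η ≤ 0) :
    ∃ K ≠ ∞, ∀ M, 0 ≤ M →
      truncGeomSum ξ η M ≤ K * ENNReal.ofReal (M + 1) ^ (if η = 0 then 1 else 0) := by
  rcases hη.lt_or_eq with hη | rfl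
  · refine ⟨(1 - 2 ^ η)⁻¹, one_sub_two_rpow_inv_ne_top hη, fun M _ => ?_⟩
    rw [if_neg hη.ne, pow_zero, mul_one, ← tsum_two_rpow_mul_natCast]
    exact truncGeomSum_le_tsum ξ η M
  · exact ⟨ENNReal.ofReal (1 / ξ + 1), ENNReal.ofReal_ne_top,
      fun M hM => by simpa only [if_true, pow_one] using truncGeomSum_zero_le hξ hM⟩

noncomputable def simplexSum (ξ₁ ξ₂ η₁ η₂ L : ℝ) : ℝ≥0∞ :=
  ∑' ℓ : {ℓ : ℕ × ℕ // ξ₁ * ℓ.1 + ξ₂ * ℓ.2 ≤ L}, (2 : ℝ≥0∞) ^ (η₁ * ℓ.1.1 + η₂ * ℓ.1.2)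

lemma simplexSum_comm (ξ₁ ξ₂ η₁ η₂ L : ℝ) :
    simplexSum ξ₁ ξ₂ η₁ η₂ L = simplexSum ξ₂ ξ₁ η₂ η₁ L := by
  rw [simplexSum, simplexSum, ← (Equiv.subtypeEquiv (Equiv.prodComm ℕ ℕ)
    fun ℓ => by rw [Equiv.prodComm_apply, Prod.fst_swap, Prod.snd_swap, add_comm]).tsum_eq]
  simp [add_comm]

lemma simplexSum_eq_tsum_truncGeomSum (ξ₁ η₁ η₂ L : ℝ) {ξ₂ : ℝ} (hξ₂ : 0 ≤ ξ₂) :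
    simplexSum ξ₁ ξ₂ η₁ η₂ L = ∑' ℓ₁ : ℕ,
      if ξ₁ * ℓ₁ ≤ L then 2 ^ (η₁ * ℓ₁) * truncGeomSum ξ₂ η₂ (L - ξ₁ * ℓ₁) else 0 := by
  refine (tsum_subtype {ℓ : ℕ × ℕ | ξ₁ * ℓ.1 + ξ₂ * ℓ.2 ≤ L}
    fun ℓ => (2 : ℝ≥0∞) ^ (η₁ * ℓ.1 + η₂ * ℓ.2)).trans ?_
  rw [ENNReal.tsum_prod']
  refine tsum_congr fun ℓ₁ => ?_
  split_ifs with h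
  · rw [truncGeomSum, ← ENNReal.tsum_mul_left]
    refine tsum_congr fun ℓ₂ => ?_
    simp only [Set.indicator_apply, Set.mem_ofPred_eq, le_sub_iff_add_le', mul_ite, mul_zero,
      ENNReal.rpow_add _ _ two_ne_zero ENNReal.ofNat_ne_top]
  · refine ENNReal.tsum_eq_zero.mpr fun ℓ₂ => Set.indicator_of_notMem (fun h' => h ?_) _
    have : 0 ≤ ξ₂ * ℓ₂ := by positivity
    simp only [Set.mem_ofPred_eq] at h'
    linarith

lemma simplexSum_le_mul {ξ₁ ξ₂ : ℝ} (hξ₁ : 0 ≤ ξ₁) (hξ₂ : 0 ≤ ξ₂) (η₁ η₂ L : ℝ) :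
    simplexSum ξ₁ ξ₂ η₁ η₂ L ≤ truncGeomSum ξ₁ η₁ L * truncGeomSum ξ₂ η₂ L := by
  rw [simplexSum_eq_tsum_truncGeomSum ξ₁ η₁ η₂ L hξ₂, truncGeomSum, ← ENNReal.tsum_mul_right]
  refine ENNReal.tsum_le_tsum fun ℓ₁ => ?_
  split_ifs
  · have : 0 ≤ ξ₁ * ℓ₁ := by positivity
    gcongr
    exact truncGeomSum_mono ξ₂ η₂ (by linarith)
  · simp

lemma simplexSum_le_of_pos {ξ₂ η₂ : ℝ} (hξ₂ : 0 < ξ₂) (hη₂ : 0 < η₂) (ξ₁ η₁ L : ℝ) :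
    simplexSum ξ₁ ξ₂ η₁ η₂ L ≤
      (1 - 2 ^ (-η₂))⁻¹ * 2 ^ (η₂ / ξ₂ * L) * truncGeomSum ξ₁ (η₁ - η₂ / ξ₂ * ξ₁) L := by
  rw [simplexSum_eq_tsum_truncGeomSum ξ₁ η₁ η₂ L hξ₂.le, truncGeomSum, ← ENNReal.tsum_mul_left]
  refine ENNReal.tsum_le_tsum fun ℓ₁ => ?_
  split_ifs with h
  · calc 2 ^ (η₁ * ℓ₁) * truncGeomSum ξ₂ η₂ (L - ξ₁ * ℓ₁)
        ≤ 2 ^ (η₁ * ℓ₁) * ((1 - 2 ^ (-η₂))⁻¹ * 2 ^ (η₂ / ξ₂ * (L - ξ₁ * ℓ₁))) :=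
          by gcongr; exact truncGeomSum_le_of_pos hξ₂ hη₂ (sub_nonneg.mpr h)
      _ = (1 - 2 ^ (-η₂))⁻¹ * 2 ^ (η₂ / ξ₂ * L) * 2 ^ ((η₁ - η₂ / ξ₂ * ξ₁) * ℓ₁) := by
          rw [mul_left_comm, mul_assoc, ← ENNReal.rpow_add _ _ two_ne_zero ENNReal.ofNat_ne_top,
            ← ENNReal.rpow_add _ _ two_ne_zero ENNReal.ofNat_ne_top]
          ring_nf
  · simp

noncomputable def logPower (ξ₁ ξ₂ η₁ η₂ : ℝ) : ℕ :=
  if η₁ = 0 ∧ η₂ = 0 then 2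
  else if (η₂ < 0 ∧ η₁ = 0) ∨ (η₁ < 0 ∧ η₂ = 0) ∨ (η₁ / ξ₁ = η₂ / ξ₂ ∧ 0 < η₁ / ξ₁) then 1
  else 0

lemma logPower_comm (ξ₁ ξ₂ η₁ η₂ : ℝ) : logPower ξ₁ ξ₂ η₁ η₂ = logPower ξ₂ ξ₁ η₂ η₁ := by
  have hratio : η₁ / ξ₁ = η₂ / ξ₂ ∧ 0 < η₁ / ξ₁ ↔ η₂ / ξ₂ = η₁ / ξ₁ ∧ 0 < η₂ / ξ₂ :=
    ⟨fun ⟨h, h'⟩ => ⟨h.symm, h ▸ h'⟩, fun ⟨h, h'⟩ => ⟨h.symm, h ▸ h'⟩⟩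
  simp only [logPower, hratio, and_comm (a := η₁ = 0), or_left_comm]

lemma ite_add_ite_le_logPower {η₁ η₂ : ℝ} (hη₁ : η₁ ≤ 0) (hη₂ : η₂ ≤ 0) (ξ₁ ξ₂ : ℝ) :
    (if η₁ = 0 then 1 else 0) + (if η₂ = 0 then 1 else 0) ≤ logPower ξ₁ ξ₂ η₁ η₂ := by
  rcases hη₁.lt_or_eq with h₁ | rfl <;> rcases hη₂.lt_or_eq with h₂ | rfl <;>
    simp_all [logPower, LT.lt.ne]

lemma one_le_logPower {ξ₁ ξ₂ η₁ η₂ : ℝ} (hratio : η₁ / ξ₁ = η₂ / ξ₂) (hpos : 0 < η₁ / ξ₁) :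
    1 ≤ logPower ξ₁ ξ₂ η₁ η₂ := by
  have hη₁ : η₁ ≠ 0 := by rintro rfl; simp at hpos
  rw [logPower, if_neg fun h => hη₁ h.1, if_pos (Or.inr (Or.inr ⟨hratio, hpos⟩))]

lemma exists_simplexSum_le_of_nonpos {ξ₁ ξ₂ η₁ η₂ : ℝ} (hξ₁ : 0 < ξ₁) (hξ₂ : 0 < ξ₂)
    (hη₁ : η₁ ≤ 0) (hη₂ : η₂ ≤ 0) :
    ∃ K ≠ ∞, ∀ L, 0 ≤ L →
      simplexSum ξ₁ ξ₂ η₁ η₂ L ≤ K * ENNReal.ofReal (L + 1) ^ logPower ξ₁ ξ₂ η₁ η₂ := by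
  obtain ⟨K₁, hK₁, h₁⟩ := exists_truncGeomSum_le_of_nonpos hξ₁ hη₁
  obtain ⟨K₂, hK₂, h₂⟩ := exists_truncGeomSum_le_of_nonpos hξ₂ hη₂
  refine ⟨K₁ * K₂, ENNReal.mul_ne_top hK₁ hK₂, fun L hL => ?_⟩
  calc simplexSum ξ₁ ξ₂ η₁ η₂ L ≤ truncGeomSum ξ₁ η₁ L * truncGeomSum ξ₂ η₂ L :=
        simplexSum_le_mul hξ₁.le hξ₂.le η₁ η₂ L
    _ ≤ K₁ * ENNReal.ofReal (L + 1) ^ (if η₁ = 0 then 1 else 0) *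
        (K₂ * ENNReal.ofReal (L + 1) ^ (if η₂ = 0 then 1 else 0)) :=
        mul_le_mul' (h₁ L hL) (h₂ L hL)
    _ = K₁ * K₂ * ENNReal.ofReal (L + 1) ^
        ((if η₁ = 0 then 1 else 0) + (if η₂ = 0 then 1 else 0)) := by ring
    _ ≤ _ := mul_le_mul_right (pow_le_pow_right₀ (ENNReal.one_le_ofReal.mpr (by linarith))
        (ite_add_ite_le_logPower hη₁ hη₂ ξ₁ ξ₂)) _

lemma exists_simplexSum_le_of_pos {ξ₁ ξ₂ η₁ η₂ : ℝ} (hξ₁ : 0 < ξ₁) (hξ₂ : 0 < ξ₂)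
    (hη₂ : 0 < η₂) (hratio : η₁ / ξ₁ ≤ η₂ / ξ₂) :
    ∃ K ≠ ∞, ∀ L, 0 ≤ L → simplexSum ξ₁ ξ₂ η₁ η₂ L ≤
      K * 2 ^ (η₂ / ξ₂ * L) * ENNReal.ofReal (L + 1) ^ logPower ξ₁ ξ₂ η₁ η₂ := by
  have hη₁ : η₁ - η₂ / ξ₂ * ξ₁ ≤ 0 := by
    rw [div_le_iff₀ hξ₁] at hratio
    linarith
  have hpower : (if η₁ - η₂ / ξ₂ * ξ₁ = 0 then 1 else 0) ≤ logPower ξ₁ ξ₂ η₁ η₂ := by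
    split_ifs with h
    · have hr : η₁ / ξ₁ = η₂ / ξ₂ := by rw [div_eq_iff hξ₁.ne']; linarith
      exact one_le_logPower hr (hr ▸ div_pos hη₂ hξ₂)
    · exact Nat.zero_le _
  obtain ⟨K₁, hK₁, h₁⟩ := exists_truncGeomSum_le_of_nonpos hξ₁ hη₁
  refine ⟨(1 - 2 ^ (-η₂))⁻¹ * K₁, ENNReal.mul_ne_top
    (one_sub_two_rpow_inv_ne_top (neg_neg_of_pos hη₂)) hK₁, fun L hL => ?_⟩
  calc simplexSum ξ₁ ξ₂ η₁ η₂ L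
      ≤ (1 - 2 ^ (-η₂))⁻¹ * 2 ^ (η₂ / ξ₂ * L) * truncGeomSum ξ₁ (η₁ - η₂ / ξ₂ * ξ₁) L :=
        simplexSum_le_of_pos hξ₂ hη₂ ξ₁ η₁ L
    _ ≤ (1 - 2 ^ (-η₂))⁻¹ * 2 ^ (η₂ / ξ₂ * L) *
        (K₁ * ENNReal.ofReal (L + 1) ^ (if η₁ - η₂ / ξ₂ * ξ₁ = 0 then 1 else 0)) :=
        mul_le_mul_right (h₁ L hL) _
    _ = (1 - 2 ^ (-η₂))⁻¹ * K₁ * 2 ^ (η₂ / ξ₂ * L) *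
        ENNReal.ofReal (L + 1) ^ (if η₁ - η₂ / ξ₂ * ξ₁ = 0 then 1 else 0) := by ring
    _ ≤ _ := mul_le_mul_right (pow_le_pow_right₀ (ENNReal.one_le_ofReal.mpr (by linarith))
        hpower) _

lemma exists_simplexSum_le_of_div_le {ξ₁ ξ₂ η₁ η₂ : ℝ} (hξ₁ : 0 < ξ₁) (hξ₂ : 0 < ξ₂)
    (hratio : η₁ / ξ₁ ≤ η₂ / ξ₂) :
    ∃ K ≠ ∞, ∀ L, 0 ≤ L → simplexSum ξ₁ ξ₂ η₁ η₂ L ≤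
      K * 2 ^ (L * max 0 (max (η₁ / ξ₁) (η₂ / ξ₂))) *
        ENNReal.ofReal (L + 1) ^ logPower ξ₁ ξ₂ η₁ η₂ := by
  rw [max_eq_right hratio]
  rcases le_or_gt η₂ 0 with hη₂ | hη₂
  · have hr₂ : η₂ / ξ₂ ≤ 0 := div_nonpos_of_nonpos_of_nonneg hη₂ hξ₂.le
    have hη₁ : η₁ ≤ 0 := by
      have := mul_nonpos_of_nonpos_of_nonneg (hratio.trans hr₂) hξ₁.le
      rwa [div_mul_cancel₀ _ hξ₁.ne'] at this
    simp_rw [max_eq_left hr₂, mul_zero, ENNReal.rpow_zero, mul_one]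
    exact exists_simplexSum_le_of_nonpos hξ₁ hξ₂ hη₁ hη₂
  · simp_rw [max_eq_right (div_pos hη₂ hξ₂).le, mul_comm _ (η₂ / ξ₂)]
    exact exists_simplexSum_le_of_pos hξ₁ hξ₂ hη₂ hratio

lemma exists_simplexSum_le {ξ₁ ξ₂ : ℝ} (hξ₁ : 0 < ξ₁) (hξ₂ : 0 < ξ₂) (η₁ η₂ : ℝ) :
    ∃ K ≠ ∞, ∀ L, 0 ≤ L → simplexSum ξ₁ ξ₂ η₁ η₂ L ≤
      K * 2 ^ (L * max 0 (max (η₁ / ξ₁) (η₂ / ξ₂))) *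
        ENNReal.ofReal (L + 1) ^ logPower ξ₁ ξ₂ η₁ η₂ := by
  rcases le_total (η₁ / ξ₁) (η₂ / ξ₂) with hratio | hratio
  · exact exists_simplexSum_le_of_div_le hξ₁ hξ₂ hratio
  · obtain ⟨K, hK, hbound⟩ := exists_simplexSum_le_of_div_le hξ₂ hξ₁ hratio
    refine ⟨K, hK, fun L hL => ?_⟩
    rw [simplexSum_comm, logPower_comm, max_comm (η₁ / ξ₁)]
    exact hbound L hL

/-- No summability hypothesis is needed: a non-summable real series and an infinite `ℝ≥0∞` sum
both become `0`. -/
lemma tsum_two_rpow_eq_toReal_simplexSum (ξ₁ ξ₂ η₁ η₂ L : ℝ) :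
    ∑' ℓ : {ℓ : ℕ × ℕ // ξ₁ * ℓ.1 + ξ₂ * ℓ.2 ≤ L}, (2 : ℝ) ^ (η₁ * (ℓ.1.1 : ℝ) + η₂ * (ℓ.1.2 : ℝ))
      = (simplexSum ξ₁ ξ₂ η₁ η₂ L).toReal := by
  rw [simplexSum, ENNReal.tsum_toReal_eq fun _ => by finiteness]
  simp [← ENNReal.toReal_rpow]

/-- For `ξ₁, ξ₂ > 0` and `η₁, η₂ ∈ ℝ`, with `v` the logarithmic power defined
by cases, there is a constant `C < ∞` such that for every `L > 0`, the sum of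
`2^(η₁ℓ₁ + η₂ℓ₂)` over the (finite) set of pairs `(ℓ₁, ℓ₂)` of nonnegative integers with
`ξ₁ℓ₁ + ξ₂ℓ₂ ≤ L` is at most `C · 2^(L·max(0, η₁/ξ₁, η₂/ξ₂)) · (L+1)^v`. -/
theorem sum_exp_index_set (ξ₁ ξ₂ η₁ η₂ : ℝ) (hξ₁ : 0 < ξ₁) (hξ₂ : 0 < ξ₂)
    (v : ℕ)
    (hv : v = if η₁ = 0 ∧ η₂ = 0 then 2
      else if (η₂ < 0 ∧ η₁ = 0) ∨ (η₁ < 0 ∧ η₂ = 0) ∨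
          (η₁ / ξ₁ = η₂ / ξ₂ ∧ 0 < η₁ / ξ₁) then 1
      else 0) :
    ∃ C : ℝ, 0 < C ∧ ∀ L : ℝ, 0 < L →
      ∑' ℓ : {ℓ : ℕ × ℕ // ξ₁ * ℓ.1 + ξ₂ * ℓ.2 ≤ L},
        (2 : ℝ) ^ (η₁ * (ℓ.1.1 : ℝ) + η₂ * (ℓ.1.2 : ℝ))
        ≤ C * 2 ^ (L * max 0 (max (η₁ / ξ₁) (η₂ / ξ₂))) * (L + 1) ^ v := by
  obtain ⟨K, hK, hbound⟩ := exists_simplexSum_le hξ₁ hξ₂ η₁ η₂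
  refine ⟨K.toReal + 1, by positivity, fun L hL => ?_⟩
  have hv' : v = logPower ξ₁ ξ₂ η₁ η₂ := hv
  rw [tsum_two_rpow_eq_toReal_simplexSum, hv']
  calc (simplexSum ξ₁ ξ₂ η₁ η₂ L).toReal
      ≤ (K * 2 ^ (L * max 0 (max (η₁ / ξ₁) (η₂ / ξ₂))) *
          ENNReal.ofReal (L + 1) ^ logPower ξ₁ ξ₂ η₁ η₂).toReal :=
        ENNReal.toReal_mono (by finiteness) (hbound L hL.le)
    _ = K.toReal * 2 ^ (L * max 0 (max (η₁ / ξ₁) (η₂ / ξ₂))) *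
          (L + 1) ^ logPower ξ₁ ξ₂ η₁ η₂ := by
        rw [ENNReal.toReal_mul, ENNReal.toReal_mul, ← ENNReal.toReal_rpow, ENNReal.toReal_pow,
          ENNReal.toReal_ofReal (by linarith), ENNReal.toReal_ofNat]
    _ ≤ _ := by gcongr; linarith
end

section
/- Let η₁, η₂ ∈ ℝ and ξ₁, ξ₂, ϑ, υ, L > 0. Then for every pair (ℓ₁, ℓ₂) of nonnegative integers with ξ₁ℓ₁ + ξ₂ℓ₂ ≤ L, one has η₁ℓ₁ + η₂ℓ₂ − ϑ·max(ℓ₁ − υℓ₂, 0) ≤ L · max(0, (η₁ − ϑ)/ξ₁, η₂/ξ₂, (η₂ + υη₁)/(ξ₂ + υξ₁)). -/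
/-!
Let `M` be the maximum on the right, so that `η₁ - ϑ ≤ M ξ₁`, `η₂ ≤ M ξ₂` and
`η₂ + υ η₁ ≤ M (ξ₂ + υ ξ₁)`. On the cone `ℓ₁ ≥ υ ℓ₂` the left side equals
`(η₁ - ϑ)(ℓ₁ - υ ℓ₂) + (η₂ + υ η₁) ℓ₂`, and on the cone `ℓ₁ ≤ υ ℓ₂` it equals
`((η₂ + υ η₁) ℓ₁ + η₂ (υ ℓ₂ - ℓ₁)) / υ`. Both are nonnegative combinations, so the left side is
at most `M (ξ₁ ℓ₁ + ξ₂ ℓ₂) ≤ M L`.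
-/

theorem mul_add_mul_sub_mul_max_le {η₁ η₂ ξ₁ ξ₂ ϑ υ M x y : ℝ} (hυ : 0 < υ)
    (hx : 0 ≤ x) (hy : 0 ≤ y) (h₁ : η₁ - ϑ ≤ M * ξ₁) (h₂ : η₂ ≤ M * ξ₂)
    (h₃ : η₂ + υ * η₁ ≤ M * (ξ₂ + υ * ξ₁)) :
    η₁ * x + η₂ * y - ϑ * max (x - υ * y) 0 ≤ M * (ξ₁ * x + ξ₂ * y) := by
  rcases le_total (x - υ * y) 0 with hxy | hxy
  · rw [max_eq_right hxy, mul_zero, sub_zero]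
    refine le_of_mul_le_mul_left ?_ hυ
    linarith [mul_le_mul_of_nonneg_right h₃ hx,
      mul_le_mul_of_nonneg_right h₂ (by linarith : 0 ≤ υ * y - x)]
  · rw [max_eq_left hxy]
    linarith [mul_le_mul_of_nonneg_right h₁ hxy, mul_le_mul_of_nonneg_right h₃ hy]

theorem linear_max_bound_general (η₁ η₂ ξ₁ ξ₂ ϑ υ L : ℝ)
    (hξ₁ : 0 < ξ₁) (hξ₂ : 0 < ξ₂) (hυ : 0 < υ) :
    ∀ ℓ₁ ℓ₂ : ℕ, ξ₁ * ℓ₁ + ξ₂ * ℓ₂ ≤ L →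
      η₁ * ℓ₁ + η₂ * ℓ₂ - ϑ * max ((ℓ₁ : ℝ) - υ * ℓ₂) 0
        ≤ L * max 0 (max ((η₁ - ϑ) / ξ₁) (max (η₂ / ξ₂) ((η₂ + υ * η₁) / (ξ₂ + υ * ξ₁)))) := by
  intro ℓ₁ ℓ₂ hℓ
  set M := max 0 (max ((η₁ - ϑ) / ξ₁) (max (η₂ / ξ₂) ((η₂ + υ * η₁) / (ξ₂ + υ * ξ₁))))
  have h₁ : (η₁ - ϑ) / ξ₁ ≤ M := le_max_of_le_right (le_max_left _ _)
  have h₂ : η₂ / ξ₂ ≤ M := le_max_of_le_right (le_max_of_le_right (le_max_left _ _))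
  have h₃ : (η₂ + υ * η₁) / (ξ₂ + υ * ξ₁) ≤ M :=
    le_max_of_le_right (le_max_of_le_right (le_max_right _ _))
  calc η₁ * ℓ₁ + η₂ * ℓ₂ - ϑ * max ((ℓ₁ : ℝ) - υ * ℓ₂) 0
      ≤ M * (ξ₁ * ℓ₁ + ξ₂ * ℓ₂) :=
        mul_add_mul_sub_mul_max_le hυ ℓ₁.cast_nonneg ℓ₂.cast_nonneg
          ((div_le_iff₀ hξ₁).1 h₁) ((div_le_iff₀ hξ₂).1 h₂)
          ((div_le_iff₀ (by positivity)).1 h₃)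
    _ ≤ M * L := mul_le_mul_of_nonneg_left hℓ (le_max_left _ _)
    _ = L * M := mul_comm _ _

/-- For `η₁, η₂ ∈ ℝ` and `ξ₁, ξ₂, ϑ, υ, L > 0`, every pair `(ℓ₁, ℓ₂)` of
nonnegative integers with `ξ₁ℓ₁ + ξ₂ℓ₂ ≤ L` satisfies
`η₁ℓ₁ + η₂ℓ₂ − ϑ·max(ℓ₁ − υℓ₂, 0) ≤ L·max(0, (η₁−ϑ)/ξ₁, η₂/ξ₂, (η₂+υη₁)/(ξ₂+υξ₁))`. -/
theorem linear_max_bound (η₁ η₂ ξ₁ ξ₂ ϑ υ L : ℝ)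
    (hξ₁ : 0 < ξ₁) (hξ₂ : 0 < ξ₂) (hϑ : 0 < ϑ) (hυ : 0 < υ) (hL : 0 < L) :
    ∀ ℓ₁ ℓ₂ : ℕ, ξ₁ * ℓ₁ + ξ₂ * ℓ₂ ≤ L →
      η₁ * ℓ₁ + η₂ * ℓ₂ - ϑ * max ((ℓ₁ : ℝ) - υ * ℓ₂) 0
        ≤ L * max 0 (max ((η₁ - ϑ) / ξ₁) (max (η₂ / ξ₂) ((η₂ + υ * η₁) / (ξ₂ + υ * ξ₁)))) :=
  linear_max_bound_general η₁ η₂ ξ₁ ξ₂ ϑ υ L hξ₁ hξ₂ hυ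
end

section
/- Let η₁, η₂ ∈ ℝ and ξ₁, ξ₂, ϑ, υ > 0. Then there exists a constant C < ∞ (depending only on η₁, η₂, ξ₁, ξ₂, ϑ, υ) such that for every real L ≥ 1, the sum of 2^((η₁ℓ₁ + η₂ℓ₂ − ϑ·max(ℓ₁ − υℓ₂, 0))/2) over all pairs (ℓ₁, ℓ₂) of nonnegative integers satisfying ξ₁ℓ₁ + ξ₂ℓ₂ ≤ L is at most C · L² · 2^((L/2)·max(0, (η₁ − ϑ)/ξ₁, η₂/ξ₂, (η₂ + υη₁)/(ξ₂ + υξ₁))). -/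
/-- For `η₁, η₂ ∈ ℝ` and `ξ₁, ξ₂, ϑ, υ > 0`, there is a constant `C < ∞`
such that for every `L ≥ 1`, the sum of `2^((η₁ℓ₁ + η₂ℓ₂ − ϑ·max(ℓ₁ − υℓ₂, 0))/2)`
over the (finite) set of pairs `(ℓ₁, ℓ₂)` of nonnegative integers with
`ξ₁ℓ₁ + ξ₂ℓ₂ ≤ L` is at most
`C·L²·2^((L/2)·max(0, (η₁−ϑ)/ξ₁, η₂/ξ₂, (η₂+υη₁)/(ξ₂+υξ₁)))`. -/
theorem sum_exp_with_max_bound (η₁ η₂ ξ₁ ξ₂ ϑ υ : ℝ)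
    (hξ₁ : 0 < ξ₁) (hξ₂ : 0 < ξ₂) (hϑ : 0 < ϑ) (hυ : 0 < υ) :
    ∃ C : ℝ, 0 < C ∧ ∀ L : ℝ, 1 ≤ L →
      ∑' ℓ : {ℓ : ℕ × ℕ // ξ₁ * ℓ.1 + ξ₂ * ℓ.2 ≤ L},
        (2 : ℝ) ^ ((η₁ * (ℓ.1.1 : ℝ) + η₂ * (ℓ.1.2 : ℝ)
            - ϑ * max ((ℓ.1.1 : ℝ) - υ * (ℓ.1.2 : ℝ)) 0) / 2)
        ≤ C * L ^ 2 *
          2 ^ ((L / 2) *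
            max 0 (max ((η₁ - ϑ) / ξ₁) (max (η₂ / ξ₂) ((η₂ + υ * η₁) / (ξ₂ + υ * ξ₁))))) := by
  refine ⟨(1/ξ₁ + 1) * (1/ξ₂ + 1), by positivity, fun L hL => ?_⟩
  set M : ℝ := max 0 (max ((η₁ - ϑ) / ξ₁) (max (η₂ / ξ₂) ((η₂ + υ * η₁) / (ξ₂ + υ * ξ₁)))) with hMdef
  have hL0 : (0:ℝ) < L := lt_of_lt_of_le one_pos hL
  have hM0 : 0 ≤ M := le_max_left _ _
  have hM1 : η₁ - ϑ ≤ ξ₁ * M := by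
    have : (η₁ - ϑ) / ξ₁ ≤ M := le_trans (le_max_left _ _) (le_max_right _ _)
    calc η₁ - ϑ = ξ₁ * ((η₁ - ϑ)/ξ₁) := by field_simp
    _ ≤ ξ₁ * M := by nlinarith
  have hM2 : η₂ ≤ ξ₂ * M := by
    have : η₂ / ξ₂ ≤ M :=
      le_trans (le_trans (le_max_left _ _) (le_max_right _ _)) (le_max_right _ _)
    calc η₂ = ξ₂ * (η₂/ξ₂) := by field_simp
    _ ≤ ξ₂ * M := by nlinarith
  have hM3 : η₂ + υ * η₁ ≤ (ξ₂ + υ * ξ₁) * M := by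
    have h : (η₂ + υ * η₁) / (ξ₂ + υ * ξ₁) ≤ M :=
      le_trans (le_trans (le_max_right _ _) (le_max_right _ _)) (le_max_right _ _)
    have hd : (0:ℝ) < ξ₂ + υ * ξ₁ := by positivity
    calc η₂ + υ * η₁ = (ξ₂ + υ * ξ₁) * ((η₂ + υ * η₁)/(ξ₂ + υ * ξ₁)) := by field_simp
    _ ≤ (ξ₂ + υ * ξ₁) * M := by nlinarith
  -- pointwise exponent bound
  have key : ∀ a b : ℝ, 0 ≤ a → 0 ≤ b → ξ₁ * a + ξ₂ * b ≤ L →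
      η₁ * a + η₂ * b - ϑ * max (a - υ * b) 0 ≤ L * M := by
    intro a b ha hb hab
    rcases le_total (a - υ * b) 0 with h | h
    · rw [max_eq_right h]
      have h1 : 0 ≤ υ * b - a := by linarith
      nlinarith [mul_nonneg ha (sub_nonneg.2 hM3), mul_nonneg h1 (sub_nonneg.2 hM2),
        mul_nonneg hM0 (sub_nonneg.2 hab), hυ.le]
    · rw [max_eq_left h]
      nlinarith [mul_nonneg (sub_nonneg.2 h) (sub_nonneg.2 hM1),
        mul_nonneg hb (sub_nonneg.2 hM3), mul_nonneg hM0 (sub_nonneg.2 hab)]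
  -- finiteness of the index set
  have hSdef := True
  set n₁ : ℕ := ⌊L / ξ₁⌋₊
  set n₂ : ℕ := ⌊L / ξ₂⌋₊
  have hsub : ∀ ℓ : ℕ × ℕ, ξ₁ * ℓ.1 + ξ₂ * ℓ.2 ≤ L → ℓ ≤ (n₁, n₂) := by
    rintro ⟨a, b⟩ hab
    have ha' : (a:ℝ) ≤ L / ξ₁ := by
      rw [le_div_iff₀ hξ₁]; nlinarith [Nat.cast_nonneg (α := ℝ) b]
    have hb' : (b:ℝ) ≤ L / ξ₂ := by
      rw [le_div_iff₀ hξ₂]; nlinarith [Nat.cast_nonneg (α := ℝ) a]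
    exact ⟨Nat.le_floor ha', Nat.le_floor hb'⟩
  have hfin : {ℓ : ℕ × ℕ | ξ₁ * ℓ.1 + ξ₂ * ℓ.2 ≤ L}.Finite :=
    (Set.finite_Iic (n₁, n₂)).subset (fun ℓ hℓ => hsub ℓ hℓ)
  haveI hFT : Fintype {ℓ : ℕ × ℕ // ξ₁ * ℓ.1 + ξ₂ * ℓ.2 ≤ L} := hfin.fintype
  have hcard : (Fintype.card {ℓ : ℕ × ℕ // ξ₁ * ℓ.1 + ξ₂ * ℓ.2 ≤ L} : ℝ)
      ≤ (1/ξ₁ + 1) * (1/ξ₂ + 1) * L ^ 2 := by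
    have h1 : Fintype.card {ℓ : ℕ × ℕ // ξ₁ * ℓ.1 + ξ₂ * ℓ.2 ≤ L} ≤ (n₁ + 1) * (n₂ + 1) := by
      have hinj := Fintype.card_le_of_injective
        (fun x : {ℓ : ℕ × ℕ // ξ₁ * ℓ.1 + ξ₂ * ℓ.2 ≤ L} =>
          (⟨x.1, Finset.mem_Iic.2 (hsub x.1 x.2)⟩ : (Finset.Iic (n₁, n₂))))
        (fun x y hxy => Subtype.ext (by simpa using hxy))
      rwa [Fintype.card_coe, Finset.card_Iic_prod, Nat.card_Iic, Nat.card_Iic] at hinj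
    have hn₁ : (n₁ : ℝ) ≤ L / ξ₁ := Nat.floor_le (by positivity)
    have hn₂ : (n₂ : ℝ) ≤ L / ξ₂ := Nat.floor_le (by positivity)
    have h2 : ((n₁ + 1) * (n₂ + 1) : ℝ) ≤ (L/ξ₁ + 1) * (L/ξ₂ + 1) := by
      have : (0:ℝ) ≤ (n₂:ℝ) + 1 := by positivity
      nlinarith [Nat.cast_nonneg (α := ℝ) n₁]
    have h3 : (L/ξ₁ + 1) * (L/ξ₂ + 1) ≤ (1/ξ₁ + 1) * (1/ξ₂ + 1) * L ^ 2 := by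
      have e1 : L/ξ₁ + 1 ≤ (1/ξ₁ + 1) * L := by
        have h : (1/ξ₁ + 1) * L = L/ξ₁ + L := by ring
        rw [h]; linarith
      have e2 : L/ξ₂ + 1 ≤ (1/ξ₂ + 1) * L := by
        have h : (1/ξ₂ + 1) * L = L/ξ₂ + L := by ring
        rw [h]; linarith
      have p1 : (0:ℝ) ≤ L/ξ₁ + 1 := by positivity
      have p2 : (0:ℝ) ≤ L/ξ₂ + 1 := by positivity
      calc (L/ξ₁ + 1) * (L/ξ₂ + 1) ≤ ((1/ξ₁+1)*L) * ((1/ξ₂+1)*L) := by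
            apply mul_le_mul e1 e2 p2 (by positivity)
      _ = (1/ξ₁ + 1) * (1/ξ₂ + 1) * L ^ 2 := by ring
    calc (Fintype.card {ℓ : ℕ × ℕ // ξ₁ * ℓ.1 + ξ₂ * ℓ.2 ≤ L} : ℝ)
        ≤ ((n₁ + 1) * (n₂ + 1) : ℝ) := by exact_mod_cast h1
    _ ≤ _ := h2.trans h3
  -- bound each term
  have hterm : ∀ ℓ : {ℓ : ℕ × ℕ // ξ₁ * ℓ.1 + ξ₂ * ℓ.2 ≤ L}, (2 : ℝ) ^ ((η₁ * (ℓ.1.1 : ℝ) + η₂ * (ℓ.1.2 : ℝ)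
      - ϑ * max ((ℓ.1.1 : ℝ) - υ * (ℓ.1.2 : ℝ)) 0) / 2) ≤ 2 ^ (L / 2 * M) := by
    rintro ⟨⟨a, b⟩, hab⟩
    apply Real.rpow_le_rpow_of_exponent_le one_le_two
    have := key a b (Nat.cast_nonneg a) (Nat.cast_nonneg b) hab
    linarith
  rw [tsum_fintype]
  calc ∑ ℓ : {ℓ : ℕ × ℕ // ξ₁ * ℓ.1 + ξ₂ * ℓ.2 ≤ L}, (2 : ℝ) ^ ((η₁ * (ℓ.1.1 : ℝ) + η₂ * (ℓ.1.2 : ℝ)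
          - ϑ * max ((ℓ.1.1 : ℝ) - υ * (ℓ.1.2 : ℝ)) 0) / 2)
      ≤ ∑ _ℓ : {ℓ : ℕ × ℕ // ξ₁ * ℓ.1 + ξ₂ * ℓ.2 ≤ L}, (2:ℝ) ^ (L / 2 * M) := Finset.sum_le_sum fun i _ => hterm i
  _ = (Fintype.card {ℓ : ℕ × ℕ // ξ₁ * ℓ.1 + ξ₂ * ℓ.2 ≤ L} : ℝ) * 2 ^ (L / 2 * M) := by
      rw [Finset.sum_const, Finset.card_univ, nsmul_eq_mul]
  _ ≤ (1/ξ₁ + 1) * (1/ξ₂ + 1) * L ^ 2 * 2 ^ (L / 2 * M) := by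
      apply mul_le_mul_of_nonneg_right hcard (Real.rpow_nonneg (by norm_num) _)
end

section
/- Let U be a real Banach space, let α₁, α₂, ξ₁, ξ₂, C > 0, and let (a_ℓ)_{ℓ∈ℕ₀²} be a family of elements of U with ‖a_ℓ‖ ≤ C·2^(−α₁ℓ₁ − α₂ℓ₂) for all ℓ = (ℓ₁, ℓ₂) ∈ ℕ₀² (so that the family is absolutely summable). Then there exists a constant C′ < ∞ (depending only on C, α₁, α₂, ξ₁, ξ₂) such that for every real L > 0, with I_L := {ℓ ∈ ℕ₀² : ξ₁ℓ₁ + ξ₂ℓ₂ ≤ L}, the norm of the sum Σ_{ℓ ∈ ℕ₀² \ I_L} a_ℓ is at most C′ · (1 + L) · 2^(−min(α₁/ξ₁, α₂/ξ₂)·L). -/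
/-!
Put `m = min (α₁ / ξ₁) (α₂ / ξ₂)` and `ρ = 2 ^ (-m) < 1`. Since `m ξᵢ ≤ αᵢ`, the hypothesis gives
`‖a ℓ‖ ≤ C ρ ^ (ξ₁ ℓ₁ + ξ₂ ℓ₂)`, so it suffices to bound the sum of `ρ ^ (ξ₁ ℓ₁ + ξ₂ ℓ₂)` over the
lattice points with `ξ₁ ℓ₁ + ξ₂ ℓ₂ > L`. Summing over `ℓ₂` first, the row `ℓ₁ = i` is a geometric
tail of size `≲ ρ ^ max L (ξ₁ i)`. The at most `L / ξ₁ + 1` rows with `ξ₁ i ≤ L` each contribute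
`≲ ρ ^ L`, which is where the factor `1 + L` comes from; the remaining rows form one more
geometric tail `≲ ρ ^ L`.
-/

open Real Set

section GeometricTails

variable {ρ ξ : ℝ}

lemma inv_one_sub_rpow_pos (hρ₀ : 0 ≤ ρ) (hρ₁ : ρ < 1) (hξ : 0 < ξ) : 0 < (1 - ρ ^ ξ)⁻¹ :=
  inv_pos.2 (sub_pos.2 (rpow_lt_one hρ₀ hρ₁ hξ))

lemma summable_rpow_mul_natCast (hρ₀ : 0 < ρ) (hρ₁ : ρ < 1) (hξ : 0 < ξ) :
    Summable fun n : ℕ => ρ ^ (ξ * n) := by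
  simp_rw [rpow_mul_natCast hρ₀.le]
  exact summable_geometric_of_lt_one (rpow_nonneg hρ₀.le ξ) (rpow_lt_one hρ₀.le hρ₁ hξ)

lemma tsum_rpow_mul_natCast_add (hρ₀ : 0 < ρ) (hρ₁ : ρ < 1) (hξ : 0 < ξ) (N : ℕ) :
    ∑' i : ℕ, ρ ^ (ξ * ↑(i + N)) = (1 - ρ ^ ξ)⁻¹ * ρ ^ (ξ * N) := by
  simp_rw [rpow_mul_natCast hρ₀.le, pow_add, tsum_mul_right,
    tsum_geometric_of_lt_one (rpow_nonneg hρ₀.le ξ) (rpow_lt_one hρ₀.le hρ₁ hξ)]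

lemma tsum_indicator_rpow_mul_natCast_le (hρ₀ : 0 < ρ) (hρ₁ : ρ < 1) (hξ : 0 < ξ) (t : ℝ) :
    ∑' n : ℕ, {n : ℕ | t < ξ * n}.indicator (fun n => ρ ^ (ξ * n)) n
      ≤ (1 - ρ ^ ξ)⁻¹ * ρ ^ max t 0 := by
  set N := ⌈t / ξ⌉₊
  have hsum := (summable_rpow_mul_natCast hρ₀ hρ₁ hξ).indicator {n : ℕ | t < ξ * n}
  have hhead :
      ∀ i ∈ Finset.range N, {n : ℕ | t < ξ * n}.indicator (fun n => ρ ^ (ξ * n)) i = 0 := by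
    intro i hi
    have : (i : ℝ) < t / ξ := Nat.lt_ceil.1 (Finset.mem_range.1 hi)
    exact indicator_of_notMem (by simpa [mul_comm] using (le_div_iff₀ hξ).1 this.le) _
  have hN : max t 0 ≤ ξ * N :=
    max_le (by simpa [div_le_iff₀ hξ, mul_comm] using Nat.le_ceil (t / ξ)) (by positivity)
  rw [← hsum.sum_add_tsum_nat_add N, Finset.sum_eq_zero hhead, zero_add]
  calc ∑' i : ℕ, {n : ℕ | t < ξ * n}.indicator (fun n => ρ ^ (ξ * n)) (i + N)
      ≤ ∑' i : ℕ, ρ ^ (ξ * ↑(i + N)) :=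
        ((summable_nat_add_iff N).2 hsum).tsum_le_tsum
          (fun i => indicator_le_self' (fun _ _ => (rpow_pos_of_pos hρ₀ _).le) _)
          ((summable_nat_add_iff N).2 (summable_rpow_mul_natCast hρ₀ hρ₁ hξ))
    _ = (1 - ρ ^ ξ)⁻¹ * ρ ^ (ξ * N) := tsum_rpow_mul_natCast_add hρ₀ hρ₁ hξ N
    _ ≤ (1 - ρ ^ ξ)⁻¹ * ρ ^ max t 0 :=
        mul_le_mul_of_nonneg_left (rpow_le_rpow_of_exponent_ge hρ₀ hρ₁.le hN)
          (inv_one_sub_rpow_pos hρ₀.le hρ₁ hξ).le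

lemma summable_rpow_max_mul_natCast (hρ₀ : 0 < ρ) (hρ₁ : ρ < 1) (hξ : 0 < ξ) (L : ℝ) :
    Summable fun i : ℕ => ρ ^ max L (ξ * i) :=
  (summable_rpow_mul_natCast hρ₀ hρ₁ hξ).of_nonneg_of_le (fun _ => (rpow_pos_of_pos hρ₀ _).le)
    fun _ => rpow_le_rpow_of_exponent_ge hρ₀ hρ₁.le (le_max_right _ _)

lemma tsum_rpow_max_mul_natCast_le (hρ₀ : 0 < ρ) (hρ₁ : ρ < 1) (hξ : 0 < ξ) {L : ℝ}
    (hL : 0 ≤ L) :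
    ∑' i : ℕ, ρ ^ max L (ξ * i) ≤ (L / ξ + 1 + (1 - ρ ^ ξ)⁻¹) * ρ ^ L := by
  set N := ⌊L / ξ⌋₊ + 1
  have hNle : (N : ℝ) ≤ L / ξ + 1 := by
    simpa [N] using Nat.floor_le (div_nonneg hL hξ.le)
  have hLN : L ≤ ξ * N := by
    have := (div_le_iff₀' hξ).1 (Nat.lt_floor_add_one (L / ξ)).le
    simpa [N] using this
  have hhead : ∑ i ∈ Finset.range N, ρ ^ max L (ξ * i) ≤ N * ρ ^ L := by
    simpa using Finset.sum_le_card_nsmul (Finset.range N) _ _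
      fun i _ => rpow_le_rpow_of_exponent_ge hρ₀ hρ₁.le (le_max_left L (ξ * (i : ℝ)))
  have htail : ∑' i : ℕ, ρ ^ max L (ξ * ↑(i + N)) = (1 - ρ ^ ξ)⁻¹ * ρ ^ (ξ * N) := by
    rw [← tsum_rpow_mul_natCast_add hρ₀ hρ₁ hξ N]
    refine tsum_congr fun i => congrArg (ρ ^ ·) (max_eq_right (hLN.trans ?_))
    gcongr
    omega
  rw [← (summable_rpow_max_mul_natCast hρ₀ hρ₁ hξ L).sum_add_tsum_nat_add N, htail]
  have hK := inv_one_sub_rpow_pos hρ₀.le hρ₁ hξ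
  have hρL : ρ ^ (ξ * N) ≤ ρ ^ L := rpow_le_rpow_of_exponent_ge hρ₀ hρ₁.le hLN
  have := rpow_pos_of_pos hρ₀ L
  nlinarith

end GeometricTails

section LatticeTail

variable {ρ ξ₁ ξ₂ : ℝ}

lemma summable_rpow_linear_prod (hρ₀ : 0 < ρ) (hρ₁ : ρ < 1) (hξ₁ : 0 < ξ₁) (hξ₂ : 0 < ξ₂) :
    Summable fun ℓ : ℕ × ℕ => ρ ^ (ξ₁ * ℓ.1 + ξ₂ * ℓ.2) := by
  simp_rw [rpow_add hρ₀]
  exact (summable_rpow_mul_natCast hρ₀ hρ₁ hξ₁).mul_of_nonneg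
    (summable_rpow_mul_natCast hρ₀ hρ₁ hξ₂) (fun _ => (rpow_pos_of_pos hρ₀ _).le)
    (fun _ => (rpow_pos_of_pos hρ₀ _).le)

lemma tsum_rpow_linear_compl_le (hρ₀ : 0 < ρ) (hρ₁ : ρ < 1) (hξ₁ : 0 < ξ₁) (hξ₂ : 0 < ξ₂)
    {L : ℝ} (hL : 0 ≤ L) :
    ∑' ℓ : {ℓ : ℕ × ℕ // ¬ (ξ₁ * ℓ.1 + ξ₂ * ℓ.2 ≤ L)},
      ρ ^ (ξ₁ * (ℓ : ℕ × ℕ).1 + ξ₂ * (ℓ : ℕ × ℕ).2)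
      ≤ (1 - ρ ^ ξ₂)⁻¹ * (ξ₁⁻¹ + 1 + (1 - ρ ^ ξ₁)⁻¹) * (1 + L) * ρ ^ L := by
  set S := {ℓ : ℕ × ℕ | ¬ (ξ₁ * ℓ.1 + ξ₂ * ℓ.2 ≤ L)}
  set w := fun ℓ : ℕ × ℕ => ρ ^ (ξ₁ * ℓ.1 + ξ₂ * ℓ.2)
  have hS := (summable_rpow_linear_prod hρ₀ hρ₁ hξ₁ hξ₂).indicator S
  have hrow : ∀ i : ℕ, ∑' j : ℕ, S.indicator w (i, j) ≤ (1 - ρ ^ ξ₂)⁻¹ * ρ ^ max L (ξ₁ * i) := by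
    intro i
    have hsplit : ∀ j : ℕ, S.indicator w (i, j) =
        ρ ^ (ξ₁ * i) * {j : ℕ | L - ξ₁ * i < ξ₂ * j}.indicator (fun j => ρ ^ (ξ₂ * j)) j := by
      intro j
      simp only [S, w, indicator_apply, mem_ofPred_eq, not_le, sub_lt_iff_lt_add', rpow_add hρ₀]
      split_ifs <;> simp
    rw [tsum_congr hsplit, tsum_mul_left]
    calc _ ≤ ρ ^ (ξ₁ * i) * ((1 - ρ ^ ξ₂)⁻¹ * ρ ^ max (L - ξ₁ * i) 0) :=
          mul_le_mul_of_nonneg_left (tsum_indicator_rpow_mul_natCast_le hρ₀ hρ₁ hξ₂ _)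
            (rpow_pos_of_pos hρ₀ _).le
      _ = (1 - ρ ^ ξ₂)⁻¹ * ρ ^ max L (ξ₁ * i) := by
          rw [mul_left_comm, ← rpow_add hρ₀, ← max_add_add_left]
          simp
  calc ∑' ℓ : {ℓ : ℕ × ℕ // ¬ (ξ₁ * ℓ.1 + ξ₂ * ℓ.2 ≤ L)},
      ρ ^ (ξ₁ * (ℓ : ℕ × ℕ).1 + ξ₂ * (ℓ : ℕ × ℕ).2)
      = ∑' i : ℕ, ∑' j : ℕ, S.indicator w (i, j) := by
        rw [← hS.tsum_prod]
        exact tsum_subtype S w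
    _ ≤ ∑' i : ℕ, (1 - ρ ^ ξ₂)⁻¹ * ρ ^ max L (ξ₁ * i) :=
        hS.prod.tsum_le_tsum hrow ((summable_rpow_max_mul_natCast hρ₀ hρ₁ hξ₁ L).mul_left _)
    _ = (1 - ρ ^ ξ₂)⁻¹ * ∑' i : ℕ, ρ ^ max L (ξ₁ * i) := tsum_mul_left
    _ ≤ (1 - ρ ^ ξ₂)⁻¹ * ((L / ξ₁ + 1 + (1 - ρ ^ ξ₁)⁻¹) * ρ ^ L) := by
        gcongr
        · exact (inv_one_sub_rpow_pos hρ₀.le hρ₁ hξ₂).le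
        · exact tsum_rpow_max_mul_natCast_le hρ₀ hρ₁ hξ₁ hL
    _ ≤ (1 - ρ ^ ξ₂)⁻¹ * ((ξ₁⁻¹ + 1 + (1 - ρ ^ ξ₁)⁻¹) * (1 + L) * ρ ^ L) := by
        have := inv_one_sub_rpow_pos hρ₀.le hρ₁ hξ₁
        gcongr
        · exact (inv_one_sub_rpow_pos hρ₀.le hρ₁ hξ₂).le
        · rw [div_eq_mul_inv]
          nlinarith [inv_pos.2 hξ₁]
    _ = (1 - ρ ^ ξ₂)⁻¹ * (ξ₁⁻¹ + 1 + (1 - ρ ^ ξ₁)⁻¹) * (1 + L) * ρ ^ L := by ring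

end LatticeTail

lemma rpow_neg_le_rpow_neg_min_rpow {b α₁ α₂ ξ₁ ξ₂ x y : ℝ} (hb : 1 ≤ b) (hξ₁ : 0 < ξ₁)
    (hξ₂ : 0 < ξ₂) (hx : 0 ≤ x) (hy : 0 ≤ y) :
    b ^ (-(α₁ * x + α₂ * y)) ≤ (b ^ (-min (α₁ / ξ₁) (α₂ / ξ₂))) ^ (ξ₁ * x + ξ₂ * y) := by
  rw [← rpow_mul (zero_le_one.trans hb)]
  refine rpow_le_rpow_of_exponent_le hb ?_
  have h₁ := mul_le_mul_of_nonneg_right ((le_div_iff₀ hξ₁).1 (min_le_left (α₁ / ξ₁) (α₂ / ξ₂))) hx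
  have h₂ := mul_le_mul_of_nonneg_right ((le_div_iff₀ hξ₂).1 (min_le_right (α₁ / ξ₁) (α₂ / ξ₂))) hy
  linarith

theorem bias_tail_bound_general
    {U : Type*} [NormedAddCommGroup U]
    (α₁ α₂ ξ₁ ξ₂ C : ℝ) (hα₁ : 0 < α₁) (hα₂ : 0 < α₂) (hξ₁ : 0 < ξ₁) (hξ₂ : 0 < ξ₂)
    (hC : 0 < C) (a : ℕ × ℕ → U)
    (ha : ∀ ℓ : ℕ × ℕ, ‖a ℓ‖ ≤ C * 2 ^ (-(α₁ * (ℓ.1 : ℝ) + α₂ * (ℓ.2 : ℝ)))) :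
    ∃ C' : ℝ, 0 < C' ∧ ∀ L : ℝ, 0 < L →
      ‖∑' ℓ : {ℓ : ℕ × ℕ // ¬ (ξ₁ * ℓ.1 + ξ₂ * ℓ.2 ≤ L)}, a ℓ‖
        ≤ C' * (1 + L) * 2 ^ (-(min (α₁ / ξ₁) (α₂ / ξ₂)) * L) := by
  set m := min (α₁ / ξ₁) (α₂ / ξ₂)
  set ρ : ℝ := 2 ^ (-m)
  have hρ₀ : 0 < ρ := rpow_pos_of_pos two_pos _
  have hρ₁ : ρ < 1 := rpow_lt_one_of_one_lt_of_neg one_lt_two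
    (neg_neg_of_pos (lt_min (div_pos hα₁ hξ₁) (div_pos hα₂ hξ₂)))
  have hK₁ := inv_one_sub_rpow_pos hρ₀.le hρ₁ hξ₁
  have hK₂ := inv_one_sub_rpow_pos hρ₀.le hρ₁ hξ₂
  refine ⟨C * ((1 - ρ ^ ξ₂)⁻¹ * (ξ₁⁻¹ + 1 + (1 - ρ ^ ξ₁)⁻¹)), by positivity, fun L hL => ?_⟩
  have hsum := ((summable_rpow_linear_prod hρ₀ hρ₁ hξ₁ hξ₂).subtype
    {ℓ : ℕ × ℕ | ¬ (ξ₁ * ℓ.1 + ξ₂ * ℓ.2 ≤ L)}).mul_left C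
  calc ‖∑' ℓ : {ℓ : ℕ × ℕ // ¬ (ξ₁ * ℓ.1 + ξ₂ * ℓ.2 ≤ L)}, a ℓ‖
      ≤ C * ∑' ℓ : {ℓ : ℕ × ℕ // ¬ (ξ₁ * ℓ.1 + ξ₂ * ℓ.2 ≤ L)},
          ρ ^ (ξ₁ * (ℓ : ℕ × ℕ).1 + ξ₂ * (ℓ : ℕ × ℕ).2) := by
        rw [← tsum_mul_left]
        refine tsum_of_norm_bounded hsum.hasSum fun ℓ => (ha ℓ).trans ?_
        exact mul_le_mul_of_nonneg_left (rpow_neg_le_rpow_neg_min_rpow one_le_two hξ₁ hξ₂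
          (Nat.cast_nonneg _) (Nat.cast_nonneg _)) hC.le
    _ ≤ C * ((1 - ρ ^ ξ₂)⁻¹ * (ξ₁⁻¹ + 1 + (1 - ρ ^ ξ₁)⁻¹) * (1 + L) * ρ ^ L) :=
        mul_le_mul_of_nonneg_left (tsum_rpow_linear_compl_le hρ₀ hρ₁ hξ₁ hξ₂ hL.le) hC.le
    _ = C * ((1 - ρ ^ ξ₂)⁻¹ * (ξ₁⁻¹ + 1 + (1 - ρ ^ ξ₁)⁻¹)) * (1 + L) * 2 ^ (-m * L) := by
        rw [show ρ ^ L = 2 ^ (-m * L) from (rpow_mul zero_le_two _ _).symm]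
        ring

/-- tail bound for the bias sum. If `‖a_ℓ‖ ≤ C·2^(−α₁ℓ₁ − α₂ℓ₂)` for all
`ℓ ∈ ℕ₀²`, then there is `C′ < ∞` such that for every `L > 0`, the norm of the sum of
`a_ℓ` over the complement of `I_L := {ℓ : ξ₁ℓ₁ + ξ₂ℓ₂ ≤ L}` is at most
`C′·(1 + L)·2^(−min(α₁/ξ₁, α₂/ξ₂)·L)`. -/
theorem bias_tail_bound
    {U : Type*} [NormedAddCommGroup U] [NormedSpace ℝ U] [CompleteSpace U]
    (α₁ α₂ ξ₁ ξ₂ C : ℝ) (hα₁ : 0 < α₁) (hα₂ : 0 < α₂) (hξ₁ : 0 < ξ₁) (hξ₂ : 0 < ξ₂)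
    (hC : 0 < C) (a : ℕ × ℕ → U)
    (ha : ∀ ℓ : ℕ × ℕ, ‖a ℓ‖ ≤ C * 2 ^ (-(α₁ * (ℓ.1 : ℝ) + α₂ * (ℓ.2 : ℝ)))) :
    ∃ C' : ℝ, 0 < C' ∧ ∀ L : ℝ, 0 < L →
      ‖∑' ℓ : {ℓ : ℕ × ℕ // ¬ (ξ₁ * ℓ.1 + ξ₂ * ℓ.2 ≤ L)}, a ℓ‖
        ≤ C' * (1 + L) * 2 ^ (-(min (α₁ / ξ₁) (α₂ / ξ₂)) * L) :=
  bias_tail_bound_general α₁ α₂ ξ₁ ξ₂ C hα₁ hα₂ hξ₁ hξ₂ hC a ha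
end

section
/- Let δ ∈ (0,1), κ ∈ ℝ, θ ∈ ℝ, χ ≤ 1−δ, m ∈ ℕ₀, ν > 0 and C, c₁, c₂ > 0. Let (λ_j)_{j≥1} be a sequence of positive reals with c₁·j^ν ≤ λ_j ≤ c₂·j^ν for all j ≥ 1, and let (ζ_j)_{j≥1} and (μ_j)_{j≥1} be real sequences with μ_j ≥ 0 and ζ_j²·μ_j ≤ C·λ_j^(1−κ−δ) for all j ≥ 1. Then there exists a constant C′ < ∞ (depending only on δ, κ, θ, χ, m, ν, C, c₁, c₂) such that for every t > 0 and every real sequence (a_j)_{j≥1}, one has Σ_{j≥1} λ_j^θ · ζ_j² · μ_j · e^(−2λ_j t) · a_{j+m}² ≤ C′ · t^(δ+χ−1) · Σ_{j≥1} λ_{j+m}^(θ+χ−κ) · a_{j+m}², where both sides are interpreted as sums in [0, ∞]. -/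
open scoped ENNReal

/-- `x^p e^{-x} ≤ p^p e^{-p}` for `x > 0`, `p ≥ 0`. -/
lemma aux_rpow_mul_exp_le (p : ℝ) (hp : 0 ≤ p) (x : ℝ) (hx : 0 < x) :
    x ^ p * Real.exp (-x) ≤ p ^ p * Real.exp (-p) := by
  rcases eq_or_lt_of_le hp with h0 | h0
  · rw [← h0]
    simp only [Real.rpow_zero, one_mul, neg_zero, Real.exp_zero]
    exact Real.exp_le_one_iff.mpr (by linarith)
  · have hlog : Real.log (x / p) ≤ x / p - 1 :=
      Real.log_le_sub_one_of_pos (div_pos hx h0)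
    have h1 : p * Real.log (x / p) ≤ p * (x / p - 1) :=
      mul_le_mul_of_nonneg_left hlog hp
    rw [Real.log_div hx.ne' h0.ne'] at h1
    have h2 : p * (x / p - 1) = x - p := by field_simp
    have key : Real.log x * p - x ≤ Real.log p * p - p := by nlinarith
    rw [Real.rpow_def_of_pos hx, Real.rpow_def_of_pos h0, ← Real.exp_add, ← Real.exp_add]
    exact Real.exp_le_exp.mpr (by linarith)

/-- spectral form of the Hilbert–Schmidt bound `‖S(t)G(u)‖² ≤ C t^{δ+χ−1}
‖u‖²`: under the eigenvalue growth `c₁ j^ν ≤ λ_j ≤ c₂ j^ν` and the noise condition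
`ζ_j² μ_j ≤ C λ_j^{1−κ−δ}`, there is a constant `C′` such that for every `t > 0` and every
real sequence `(a_j)`,
`Σ_j λ_j^θ ζ_j² μ_j e^{−2λ_j t} a_{j+m}² ≤ C′ t^{δ+χ−1} Σ_j λ_{j+m}^{θ+χ−κ} a_{j+m}²`,
both sides interpreted as sums in `[0,∞]`. Sequences are indexed by `j ≥ 1`, encoded here
by evaluating at `j + 1` for `j : ℕ`. -/
theorem semigroup_noise_spectral_bound
    (δ κ θ χ : ℝ) (hδ : δ ∈ Set.Ioo (0 : ℝ) 1) (hχ : χ ≤ 1 - δ)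
    (m : ℕ) (ν : ℝ) (hν : 0 < ν)
    (C c₁ c₂ : ℝ) (hC : 0 < C) (hc₁ : 0 < c₁) (hc₂ : 0 < c₂)
    (lam : ℕ → ℝ) (hlam_pos : ∀ j, 1 ≤ j → 0 < lam j)
    (hlam_lb : ∀ j : ℕ, 1 ≤ j → c₁ * (j : ℝ) ^ ν ≤ lam j)
    (hlam_ub : ∀ j : ℕ, 1 ≤ j → lam j ≤ c₂ * (j : ℝ) ^ ν)
    (ζ μ : ℕ → ℝ) (hμ : ∀ j, 1 ≤ j → 0 ≤ μ j)
    (hζμ : ∀ j : ℕ, 1 ≤ j → ζ j ^ 2 * μ j ≤ C * lam j ^ (1 - κ - δ)) :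
    ∃ C' : ℝ, 0 < C' ∧ ∀ t : ℝ, 0 < t → ∀ a : ℕ → ℝ,
      ∑' j : ℕ, ENNReal.ofReal
          (lam (j + 1) ^ θ * ζ (j + 1) ^ 2 * μ (j + 1) *
            Real.exp (-2 * lam (j + 1) * t) * a (j + 1 + m) ^ 2)
        ≤ ENNReal.ofReal (C' * t ^ (δ + χ - 1)) *
          ∑' j : ℕ, ENNReal.ofReal (lam (j + 1 + m) ^ (θ + χ - κ) * a (j + 1 + m) ^ 2) := by
  set p : ℝ := 1 - δ - χ with hp_def
  have hp : 0 ≤ p := by simp only [hp_def]; linarith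
  set s : ℝ := θ + χ - κ with hs_def
  -- constant from the exponential bound
  set K : ℝ := p ^ p * Real.exp (-p) * (2 : ℝ) ^ (-p) with hK_def
  have hppos : 0 < p ^ p := by
    rcases eq_or_lt_of_le hp with h0 | h0
    · rw [← h0]; simp
    · exact Real.rpow_pos_of_pos h0 _
  have hK : 0 < K := by
    have : (0:ℝ) < (2:ℝ) ^ (-p) := Real.rpow_pos_of_pos two_pos _
    positivity
  -- comparison constant
  have hc12 : c₁ ≤ c₂ := by
    have h1 := (hlam_lb 1 le_rfl).trans (hlam_ub 1 le_rfl)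
    simpa using h1
  set R : ℝ := (c₂ / c₁) * ((m : ℝ) + 1) ^ ν with hR_def
  have hR1 : 1 ≤ R := by
    have h1 : (1:ℝ) ≤ c₂ / c₁ := (one_le_div hc₁).mpr hc12
    have h2 : (1:ℝ) ≤ ((m : ℝ) + 1) ^ ν := by
      have := Real.rpow_le_rpow zero_le_one
        (show (1:ℝ) ≤ (m : ℝ) + 1 by linarith [Nat.cast_nonneg (α := ℝ) m]) hν.le
      simpa using this
    calc (1:ℝ) = 1 * 1 := by ring
      _ ≤ (c₂ / c₁) * ((m : ℝ) + 1) ^ ν := by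
          exact mul_le_mul h1 h2 zero_le_one (by linarith)
  have hR0 : 0 < R := lt_of_lt_of_le one_pos hR1
  set M : ℝ := R ^ |s| with hM_def
  have hM0 : 0 < M := Real.rpow_pos_of_pos hR0 _
  -- comparison: lam j ^ s ≤ M * lam (j+m) ^ s for j ≥ 1
  have hcomp : ∀ j : ℕ, 1 ≤ j → lam j ^ s ≤ M * lam (j + m) ^ s := by
    intro j hj
    have hjm : 1 ≤ j + m := le_trans hj (Nat.le_add_right _ _)
    have hlj := hlam_pos j hj
    have hljm := hlam_pos (j + m) hjm
    have hjpos : (0:ℝ) < (j : ℝ) := by exact_mod_cast hj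
    have hjmpos : (0:ℝ) < ((j + m : ℕ) : ℝ) := by exact_mod_cast hjm
    -- ratio bounds
    have hjr : (j:ℝ) ^ ν ≤ ((j + m : ℕ) : ℝ) ^ ν := by
      apply Real.rpow_le_rpow hjpos.le _ hν.le
      exact_mod_cast Nat.le_add_right j m
    have hjr2 : ((j + m : ℕ) : ℝ) ^ ν ≤ (((m:ℝ) + 1)) ^ ν * (j:ℝ) ^ ν := by
      rw [← Real.mul_rpow (by positivity) hjpos.le]
      apply Real.rpow_le_rpow hjmpos.le _ hν.le
      have hj1 : (1:ℝ) ≤ (j:ℝ) := by exact_mod_cast hj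
      push_cast
      nlinarith [hj1, Nat.cast_nonneg (α := ℝ) m]
    have hratio_ub : lam j ≤ (c₂ / c₁) * lam (j + m) := by
      have h1 : lam j ≤ c₂ * (j:ℝ) ^ ν := hlam_ub j hj
      have h2 : c₁ * ((j + m : ℕ) : ℝ) ^ ν ≤ lam (j + m) := hlam_lb _ hjm
      have h3 : c₂ * (j:ℝ) ^ ν ≤ (c₂ / c₁) * (c₁ * ((j + m : ℕ) : ℝ) ^ ν) := by
        rw [show (c₂ / c₁) * (c₁ * ((j + m : ℕ) : ℝ) ^ ν) = c₂ * ((j + m : ℕ) : ℝ) ^ ν by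
          field_simp]
        exact mul_le_mul_of_nonneg_left hjr hc₂.le
      calc lam j ≤ c₂ * (j:ℝ) ^ ν := h1
        _ ≤ (c₂ / c₁) * (c₁ * ((j + m : ℕ) : ℝ) ^ ν) := h3
        _ ≤ (c₂ / c₁) * lam (j + m) :=
            mul_le_mul_of_nonneg_left h2 (by positivity)
    have hratio_lb : lam (j + m) ≤ R * lam j := by
      have h1 : lam (j + m) ≤ c₂ * ((j + m : ℕ) : ℝ) ^ ν := hlam_ub _ hjm
      have h2 : c₁ * (j:ℝ) ^ ν ≤ lam j := hlam_lb j hj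
      have key : R * (c₁ * (j:ℝ) ^ ν) = c₂ * ((((m:ℝ) + 1)) ^ ν * (j:ℝ) ^ ν) := by
        rw [hR_def]; field_simp
      calc lam (j + m) ≤ c₂ * ((j + m : ℕ) : ℝ) ^ ν := h1
        _ ≤ c₂ * ((((m:ℝ) + 1)) ^ ν * (j:ℝ) ^ ν) :=
            mul_le_mul_of_nonneg_left hjr2 hc₂.le
        _ = R * (c₁ * (j:ℝ) ^ ν) := key.symm
        _ ≤ R * lam j := mul_le_mul_of_nonneg_left h2 hR0.le
    -- now case on sign of s
    rcases le_or_gt 0 s with hs0 | hs0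
    · have h1 : lam j ^ s ≤ ((c₂ / c₁) * lam (j + m)) ^ s :=
        Real.rpow_le_rpow hlj.le hratio_ub hs0
      have h2 : ((c₂ / c₁) * lam (j + m)) ^ s = (c₂ / c₁) ^ s * lam (j + m) ^ s :=
        Real.mul_rpow (by positivity) hljm.le
      have h3 : (c₂ / c₁) ^ s ≤ M := by
        rw [hM_def, abs_of_nonneg hs0]
        apply Real.rpow_le_rpow (by positivity) _ hs0
        rw [hR_def]
        have h2 : (1:ℝ) ≤ ((m : ℝ) + 1) ^ ν := by
          have := Real.rpow_le_rpow zero_le_one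
            (show (1:ℝ) ≤ (m : ℝ) + 1 by linarith [Nat.cast_nonneg (α := ℝ) m]) hν.le
          simpa using this
        nlinarith [div_pos hc₂ hc₁]
      calc lam j ^ s ≤ (c₂ / c₁) ^ s * lam (j + m) ^ s := h2 ▸ h1
        _ ≤ M * lam (j + m) ^ s :=
            mul_le_mul_of_nonneg_right h3 (Real.rpow_nonneg hljm.le _)
    · -- s < 0 : use lam (j+m) ≤ R * lam j
      have h1 : (R * lam j) ^ s ≤ lam (j + m) ^ s :=
        Real.rpow_le_rpow_of_nonpos hljm hratio_lb hs0.le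
      have h2 : (R * lam j) ^ s = R ^ s * lam j ^ s :=
        Real.mul_rpow hR0.le hlj.le
      calc lam j ^ s = (M * R ^ s) * lam j ^ s := by
            rw [hM_def, abs_of_neg hs0, ← Real.rpow_add hR0]; simp
        _ = M * (R ^ s * lam j ^ s) := by ring
        _ = M * (R * lam j) ^ s := by rw [h2]
        _ ≤ M * lam (j + m) ^ s := mul_le_mul_of_nonneg_left h1 hM0.le
  -- the final constant
  refine ⟨C * K * M, by positivity, ?_⟩
  intro t ht a
  -- termwise bound in ℝ
  have hterm : ∀ j : ℕ,
      lam (j + 1) ^ θ * ζ (j + 1) ^ 2 * μ (j + 1) *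
          Real.exp (-2 * lam (j + 1) * t) * a (j + 1 + m) ^ 2
        ≤ (C * K * M * t ^ (δ + χ - 1)) *
          (lam (j + 1 + m) ^ (θ + χ - κ) * a (j + 1 + m) ^ 2) := by
    intro j
    set n := j + 1 with hn
    have hn1 : 1 ≤ n := Nat.le_add_left 1 j
    have hln : 0 < lam n := hlam_pos n hn1
    have hx : 0 < 2 * lam n * t := by positivity
    -- exponential bound: lam n ^ p * exp (-2 lam n t) ≤ K * t ^ (-p)
    have hexp : lam n ^ p * Real.exp (-2 * lam n * t) ≤ K * t ^ (-p) := by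
      have h1 : (2 * lam n * t) ^ p * Real.exp (-(2 * lam n * t)) ≤
          p ^ p * Real.exp (-p) := aux_rpow_mul_exp_le p hp _ hx
      have h2 : (2 * lam n * t) ^ p = (2 * t) ^ p * lam n ^ p := by
        rw [show 2 * lam n * t = (2 * t) * lam n by ring,
          Real.mul_rpow (by positivity) hln.le]
      have h3 : (0:ℝ) < (2 * t) ^ p := Real.rpow_pos_of_pos (by positivity) _
      have h4 : lam n ^ p * Real.exp (-(2 * lam n * t)) ≤
          p ^ p * Real.exp (-p) / (2 * t) ^ p := by
        rw [le_div_iff₀ h3]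
        calc lam n ^ p * Real.exp (-(2 * lam n * t)) * (2 * t) ^ p
            = (2 * lam n * t) ^ p * Real.exp (-(2 * lam n * t)) := by rw [h2]; ring
          _ ≤ p ^ p * Real.exp (-p) := h1
      have h5 : p ^ p * Real.exp (-p) / (2 * t) ^ p = K * t ^ (-p) := by
        rw [hK_def, Real.mul_rpow (by norm_num) ht.le, Real.rpow_neg two_pos.le,
          Real.rpow_neg ht.le]
        field_simp
      calc lam n ^ p * Real.exp (-2 * lam n * t)
          = lam n ^ p * Real.exp (-(2 * lam n * t)) := by ring_nf
        _ ≤ p ^ p * Real.exp (-p) / (2 * t) ^ p := h4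
        _ = K * t ^ (-p) := h5
    have hze : 0 ≤ ζ n ^ 2 * μ n := mul_nonneg (sq_nonneg _) (hμ n hn1)
    have hsplit : lam n ^ (1 - κ - δ) = lam n ^ (s - θ) * lam n ^ p := by
      rw [← Real.rpow_add hln]; congr 1; rw [hs_def, hp_def]; ring
    have hcomp' := hcomp n hn1
    have htp : t ^ (-p) = t ^ (δ + χ - 1) := by rw [hp_def]; ring_nf
    have heq : lam n ^ θ * (C * lam n ^ (1 - κ - δ)) = C * (lam n ^ s * lam n ^ p) := by
      rw [← Real.rpow_add hln s p,
        show s + p = (1 - κ - δ) + θ from by rw [hs_def, hp_def]; ring,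
        Real.rpow_add hln]
      ring
    have hs_nn : (0:ℝ) ≤ lam n ^ s := Real.rpow_nonneg hln.le s
    have hsm_nn : (0:ℝ) ≤ lam (n + m) ^ s :=
      Real.rpow_nonneg (hlam_pos (n + m) (le_trans hn1 (Nat.le_add_right _ _))).le s
    have htn : (0:ℝ) ≤ t ^ (-p) := Real.rpow_nonneg ht.le _
    calc lam n ^ θ * ζ n ^ 2 * μ n * Real.exp (-2 * lam n * t) * a (n + m) ^ 2
        = (lam n ^ θ * (ζ n ^ 2 * μ n)) * (Real.exp (-2 * lam n * t) * a (n + m) ^ 2) := by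
          ring
      _ ≤ (C * (lam n ^ s * lam n ^ p)) * (Real.exp (-2 * lam n * t) * a (n + m) ^ 2) := by
          refine mul_le_mul_of_nonneg_right ?_ (by positivity)
          calc lam n ^ θ * (ζ n ^ 2 * μ n)
              ≤ lam n ^ θ * (C * lam n ^ (1 - κ - δ)) :=
                mul_le_mul_of_nonneg_left (hζμ n hn1) (Real.rpow_nonneg hln.le θ)
            _ = C * (lam n ^ s * lam n ^ p) := heq
      _ = (C * lam n ^ s * a (n + m) ^ 2) * (lam n ^ p * Real.exp (-2 * lam n * t)) := by
          ring
      _ ≤ (C * lam n ^ s * a (n + m) ^ 2) * (K * t ^ (-p)) := by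
          refine mul_le_mul_of_nonneg_left hexp ?_
          exact mul_nonneg (mul_nonneg hC.le hs_nn) (sq_nonneg _)
      _ = (C * a (n + m) ^ 2 * K * t ^ (-p)) * lam n ^ s := by ring
      _ ≤ (C * a (n + m) ^ 2 * K * t ^ (-p)) * (M * lam (n + m) ^ s) := by
          refine mul_le_mul_of_nonneg_left hcomp' ?_
          exact mul_nonneg (mul_nonneg (mul_nonneg hC.le (sq_nonneg _)) hK.le) htn
      _ = (C * K * M * t ^ (-p)) * (lam (n + m) ^ s * a (n + m) ^ 2) := by ring
      _ = (C * K * M * t ^ (δ + χ - 1)) * (lam (n + m) ^ s * a (n + m) ^ 2) := by rw [htp]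
  calc ∑' j : ℕ, ENNReal.ofReal
        (lam (j + 1) ^ θ * ζ (j + 1) ^ 2 * μ (j + 1) *
          Real.exp (-2 * lam (j + 1) * t) * a (j + 1 + m) ^ 2)
      ≤ ∑' j : ℕ, ENNReal.ofReal ((C * K * M * t ^ (δ + χ - 1)) *
          (lam (j + 1 + m) ^ (θ + χ - κ) * a (j + 1 + m) ^ 2)) :=
        ENNReal.tsum_le_tsum fun j => ENNReal.ofReal_le_ofReal (hterm j)
    _ = ∑' j : ℕ, ENNReal.ofReal (C * K * M * t ^ (δ + χ - 1)) *
          ENNReal.ofReal (lam (j + 1 + m) ^ (θ + χ - κ) * a (j + 1 + m) ^ 2) := by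
        congr 1; funext j
        exact ENNReal.ofReal_mul (by positivity)
    _ = ENNReal.ofReal (C * K * M * t ^ (δ + χ - 1)) *
          ∑' j : ℕ, ENNReal.ofReal (lam (j + 1 + m) ^ (θ + χ - κ) * a (j + 1 + m) ^ 2) :=
        ENNReal.tsum_mul_left
end

section
/- For all θ > 0, a ≥ 0 and p ≥ 0 there exists a constant C < ∞ such that for all ε ∈ (0,1), setting L := max(⌈θ·(log₂(2ε^{-1}) + log₂(θ·log₂(2ε^{-1})))⌉, 1), one has L^p · 2^(aL) ≤ C · (log₂(2ε^{-1}))^(p+θa) · ε^(−θa). -/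
/-- with the MIMC maximal level
`L := max(⌈θ·(log₂(2ε⁻¹) + log₂(θ·log₂(2ε⁻¹)))⌉, 1)`, for all `θ > 0`, `a ≥ 0`, `p ≥ 0`,
there is a constant `C` such that `L^p · 2^{aL} ≤ C·(log₂(2ε⁻¹))^{p+θa}·ε^{−θa}` for all
`ε ∈ (0,1)`. -/
theorem mimc_level_choice_cost (θ a p : ℝ) (hθ : 0 < θ) (ha : 0 ≤ a) (hp : 0 ≤ p) :
    ∃ C : ℝ, 0 < C ∧ ∀ ε : ℝ, ε ∈ Set.Ioo (0 : ℝ) 1 →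
      ∀ L : ℝ,
        L = max ((⌈θ * (Real.logb 2 (2 * ε⁻¹) +
            Real.logb 2 (θ * Real.logb 2 (2 * ε⁻¹)))⌉ : ℤ) : ℝ) 1 →
        L ^ p * 2 ^ (a * L)
          ≤ C * (Real.logb 2 (2 * ε⁻¹)) ^ (p + θ * a) * ε ^ (-(θ * a)) := by
  have hlog2 : (0:ℝ) < Real.log 2 := Real.log_pos one_lt_two
  set K : ℝ := θ + θ * |Real.logb 2 θ| + θ / Real.log 2 + 1 with hKdef
  have hK0 : (0:ℝ) < K := by positivity
  refine ⟨max (2 ^ a) (K ^ p * θ ^ (θ * a) * 2 ^ (a + θ * a)), by positivity, ?_⟩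
  rintro ε ⟨hε0, hε1⟩ L hL
  set x := Real.logb 2 (2 * ε⁻¹) with hxdef
  have hεinv : (1:ℝ) < ε⁻¹ := (one_lt_inv₀ hε0).mpr hε1
  have h2ε : (2:ℝ) < 2 * ε⁻¹ := by linarith
  have hx : 1 < x := by
    rw [hxdef]
    rw [show (1:ℝ) = Real.logb 2 2 by simp]
    exact Real.logb_lt_logb one_lt_two two_pos h2ε
  have hx0 : 0 < x := by linarith
  have hθx : 0 < θ * x := by positivity
  have hxpow : 1 ≤ x ^ (p + θ * a) := by
    calc (1:ℝ) = x ^ (0:ℝ) := by simp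
    _ ≤ x ^ (p + θ * a) := Real.rpow_le_rpow_of_exponent_le hx.le (by positivity)
  have hεpow : 1 ≤ ε ^ (-(θ * a)) :=
    Real.one_le_rpow_of_pos_of_le_one_of_nonpos hε0 hε1.le (neg_nonpos.mpr (by positivity))
  rcases le_total ((⌈θ * (x + Real.logb 2 (θ * x))⌉ : ℤ) : ℝ) 1 with h | h
  · -- L = 1
    rw [max_eq_right h] at hL
    subst hL
    rw [Real.one_rpow, mul_one, one_mul]
    have hC : (2:ℝ) ^ a ≤ max (2 ^ a) (K ^ p * θ ^ (θ * a) * 2 ^ (a + θ * a)) := le_max_left _ _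
    have hCnn : (0:ℝ) ≤ max (2 ^ a) (K ^ p * θ ^ (θ * a) * 2 ^ (a + θ * a)) := by positivity
    calc (2:ℝ) ^ a = 2 ^ a * 1 * 1 := by ring
    _ ≤ max (2 ^ a) (K ^ p * θ ^ (θ * a) * 2 ^ (a + θ * a)) * x ^ (p + θ * a) * ε ^ (-(θ * a)) :=
      mul_le_mul (mul_le_mul hC hxpow zero_le_one hCnn) hεpow zero_le_one (by positivity)
  · -- L = ⌈y⌉
    rw [max_eq_left h] at hL
    have hL1 : (1:ℝ) ≤ L := by rw [hL]; exact h
    have hL0 : (0:ℝ) ≤ L := by linarith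
    have hLy : L ≤ θ * (x + Real.logb 2 (θ * x)) + 1 := by
      rw [hL]; exact (Int.ceil_lt_add_one _).le
    have hlogmul : Real.logb 2 (θ * x) = Real.logb 2 θ + Real.logb 2 x :=
      Real.logb_mul (ne_of_gt hθ) (ne_of_gt hx0)
    have hlogx : Real.logb 2 x ≤ x / Real.log 2 := by
      have h1 : Real.log x ≤ x - 1 := Real.log_le_sub_one_of_pos hx0
      rw [Real.logb, div_le_div_iff_of_pos_right hlog2]
      linarith
    have hlogθ : Real.logb 2 θ ≤ |Real.logb 2 θ| := le_abs_self _
    have hLK : L ≤ K * x := by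
      have hKx : θ * (x + Real.logb 2 (θ * x)) + 1 ≤ K * x := by
        rw [hlogmul, hKdef]
        have h1 : θ * Real.logb 2 θ ≤ θ * |Real.logb 2 θ| :=
          mul_le_mul_of_nonneg_left hlogθ hθ.le
        have h2 : θ * Real.logb 2 x ≤ θ * (x / Real.log 2) :=
          mul_le_mul_of_nonneg_left hlogx hθ.le
        have h3 : θ * |Real.logb 2 θ| * 1 ≤ θ * |Real.logb 2 θ| * x :=
          mul_le_mul_of_nonneg_left hx.le (by positivity)
        have h4 : θ / Real.log 2 * 1 ≤ θ / Real.log 2 * x :=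
          mul_le_mul_of_nonneg_left hx.le (by positivity)
        have : θ * (x / Real.log 2) = θ / Real.log 2 * x := by ring
        nlinarith
      linarith
    -- bound L^p
    have hA : L ^ p ≤ K ^ p * x ^ p := by
      calc L ^ p ≤ (K * x) ^ p := Real.rpow_le_rpow hL0 hLK hp
      _ = K ^ p * x ^ p := Real.mul_rpow hK0.le hx0.le
    -- bound 2^(aL)
    have h2x : (2:ℝ) ^ x = 2 * ε⁻¹ := Real.rpow_logb two_pos (by norm_num) (by positivity)
    have hB : (2:ℝ) ^ (a * L) ≤ 2 ^ a * (θ ^ (θ * a) * x ^ (θ * a)) * (2 ^ (θ * a) * ε ^ (-(θ * a))) := by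
      have step1 : (2:ℝ) ^ (a * L) ≤ 2 ^ (a * (θ * (x + Real.logb 2 (θ * x)) + 1)) :=
        Real.rpow_le_rpow_of_exponent_le one_le_two
          (mul_le_mul_of_nonneg_left hLy ha)
      have expand : a * (θ * (x + Real.logb 2 (θ * x)) + 1)
          = a + Real.logb 2 (θ * x) * (θ * a) + x * (θ * a) := by ring
      rw [expand, Real.rpow_add two_pos, Real.rpow_add two_pos,
        Real.rpow_mul two_pos.le (Real.logb 2 (θ * x)) (θ * a),
        Real.rpow_mul two_pos.le x (θ * a), h2x,
        Real.rpow_logb two_pos (by norm_num) hθx,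
        Real.mul_rpow hθ.le hx0.le, Real.mul_rpow two_pos.le (by positivity : (0:ℝ) ≤ ε⁻¹),
        Real.inv_rpow hε0.le, ← Real.rpow_neg hε0.le] at step1
      exact step1.trans_eq (by ring)
    -- combine
    have hLHS : L ^ p * 2 ^ (a * L)
        ≤ (K ^ p * x ^ p) * (2 ^ a * (θ ^ (θ * a) * x ^ (θ * a)) * (2 ^ (θ * a) * ε ^ (-(θ * a)))) := by
      apply mul_le_mul hA hB (by positivity) (by positivity)
    have hEq : (K ^ p * x ^ p) * (2 ^ a * (θ ^ (θ * a) * x ^ (θ * a)) * (2 ^ (θ * a) * ε ^ (-(θ * a))))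
        = (K ^ p * θ ^ (θ * a) * 2 ^ (a + θ * a)) * x ^ (p + θ * a) * ε ^ (-(θ * a)) := by
      rw [Real.rpow_add two_pos, Real.rpow_add hx0]
      ring
    rw [hEq] at hLHS
    refine hLHS.trans ?_
    have hC2 : K ^ p * θ ^ (θ * a) * 2 ^ (a + θ * a)
        ≤ max (2 ^ a) (K ^ p * θ ^ (θ * a) * 2 ^ (a + θ * a)) := le_max_right _ _
    exact mul_le_mul_of_nonneg_right
      (mul_le_mul_of_nonneg_right hC2 (by positivity)) (by positivity)
end
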